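/- arXiv:1903.07715 — 10 statements merged into one kernel-verified Lean document; each statement's English description precedes it below -/
import Mathlib

section
/- (Theorem 1, case k ≥ l.) Assume hypothesis H(l), and suppose k, l : X → EReal satisfy k(x) ≥ l(x) for all x ∈ X. Then the warm-started value function coincides with the standard one: for all x ∈ X and all t < 0, V[l,k](x,t) = V[l](x,t). -/
/-- The warm-started value function: running cost `l`, warm-start function `k`,
trajectories `ξ x t u d : ℝ → X`. -/
noncomputable def warmVal {X U D : Type*} (ξ : X → ℝ → U → D → ℝ → X)
    (l k : X → EReal) (x : X) (t : ℝ) : EReal :=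
  ⨆ u : U, ⨅ d : D,
    min (⨅ τ ∈ Set.Ico t (0 : ℝ), l (ξ x t u d τ)) (k (ξ x t u d 0))

/-- Theorem 1, case k ≥ l: under hypothesis H(l), warm-starting from
any k ≥ l gives exactly the standard value function. -/
theorem warmVal_eq_of_warm_ge_target
    {X U D : Type*} [Nonempty X] [Nonempty U] [Nonempty D]
    (ξ : X → ℝ → U → D → ℝ → X)
    (l k : X → EReal)
    (Hl : ∀ (x : X) (t : ℝ), t < 0 → ∀ (u : U) (d : D),
      (⨅ τ ∈ Set.Ico t (0 : ℝ), l (ξ x t u d τ)) ≤ l (ξ x t u d 0))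
    (hkl : ∀ x, l x ≤ k x) :
    ∀ (x : X) (t : ℝ), t < 0 → warmVal ξ l k x t = warmVal ξ l l x t := by
  intro x t ht
  unfold warmVal
  refine iSup_congr fun u => iInf_congr fun d => ?_
  have h := Hl x t ht u d
  rw [min_eq_left h, min_eq_left (h.trans (hkl _))]
end

section
/- (Theorem 1: conservativeness of warm-start reachability.) Assume hypothesis H(l). Then for EVERY warm-start function k : X → EReal, and for all x ∈ X and all t < 0, V[l,k](x,t) ≤ V[l](x,t); i.e., warm-starting from an arbitrary initialization always yields a value function at most the standard one, hence an over-approximation of the backward reachable tube. -/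
/-- Theorem 1: under hypothesis H(l), warm-starting from ANY
initialization yields a value function at most the standard one. -/
theorem warmVal_conservative
    {X U D : Type*} [Nonempty X] [Nonempty U] [Nonempty D]
    (ξ : X → ℝ → U → D → ℝ → X)
    (l : X → EReal)
    (Hl : ∀ (x : X) (t : ℝ), t < 0 → ∀ (u : U) (d : D),
      (⨅ τ ∈ Set.Ico t (0 : ℝ), l (ξ x t u d τ)) ≤ l (ξ x t u d 0)) :
    ∀ (k : X → EReal) (x : X) (t : ℝ), t < 0 →
      warmVal ξ l k x t ≤ warmVal ξ l l x t := by
  intro k x t ht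
  refine iSup_mono fun u => iInf_mono fun d => ?_
  exact le_trans (min_le_left _ _) (le_min le_rfl (Hl x t ht u d))
end

section
/- (Theorem 1, converged form.) Assume hypothesis H(l), let k : X → EReal be arbitrary, and suppose that for each x ∈ X the limits V*[l,k](x) := lim_{t → −∞} V[l,k](x,t) and V*[l](x) := lim_{t → −∞} V[l](x,t) exist in EReal. Then V*[l,k](x) ≤ V*[l](x) for all x ∈ X; in particular the converged warm-started sub-zero level set contains the converged standard sub-zero level set. -/
/-- Theorem 1, converged form: under hypothesis H(l), if the
warm-started and standard value functions converge as t → −∞, then the limit of the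
warm-started one is at most the limit of the standard one. -/
theorem warmVal_limit_conservative
    {X U D : Type*} [Nonempty X] [Nonempty U] [Nonempty D]
    (ξ : X → ℝ → U → D → ℝ → X)
    (l k : X → EReal)
    (Hl : ∀ (x : X) (t : ℝ), t < 0 → ∀ (u : U) (d : D),
      (⨅ τ ∈ Set.Ico t (0 : ℝ), l (ξ x t u d τ)) ≤ l (ξ x t u d 0))
    (Vk Vl : X → EReal)
    (hVk : ∀ x, Filter.Tendsto (fun t : ℝ => warmVal ξ l k x t) Filter.atBot (nhds (Vk x)))
    (hVl : ∀ x, Filter.Tendsto (fun t : ℝ => warmVal ξ l l x t) Filter.atBot (nhds (Vl x))) :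
    ∀ x, Vk x ≤ Vl x := by
  intro x
  refine le_of_tendsto_of_tendsto (hVk x) (hVl x) ?_
  filter_upwards [Filter.eventually_lt_atBot (0 : ℝ)] with t ht
  refine iSup_mono fun u => iInf_mono fun d => ?_
  exact (min_le_left _ _).trans (le_min le_rfl (Hl x t ht u d))
end

section
/- (Lemma 1.) Let k, k' : X → EReal satisfy k'(x) ≤ k(x) for all x ∈ X, and suppose k' is invariant under the value iteration with running cost l, i.e., V[l,k'](x,t) = k'(x) for all x ∈ X and all t ≤ 0. Then the warm-started value function stays above k': for all x ∈ X and all t ≤ 0, V[l,k](x,t) ≥ k'(x). (In the paper, k' = V*_l is the converged standard value function, so warm-starting from any k ≥ V*_l never drops below V*_l.) -/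
/-- Lemma 1: if k' ≤ k and k' is invariant under the value iteration
with running cost l, then the warm-started value function stays above k'. -/
theorem warmVal_ge_invariant
    {X U D : Type*} [Nonempty X] [Nonempty U] [Nonempty D]
    (ξ : X → ℝ → U → D → ℝ → X)
    (l k k' : X → EReal)
    (hk'k : ∀ x, k' x ≤ k x)
    (hinv : ∀ (x : X) (t : ℝ), t ≤ 0 → warmVal ξ l k' x t = k' x) :
    ∀ (x : X) (t : ℝ), t ≤ 0 → k' x ≤ warmVal ξ l k x t := by
  intro x t ht
  rw [← hinv x t ht]
  refine iSup_mono fun u => iInf_mono fun d => min_le_min le_rfl (hk'k _)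
end

section
/- (Theorem 2: exactness of warm-start reachability from over-approximating initializations.) Assume hypothesis H(l). Let k, k' : X → EReal satisfy: (i) k'(x) ≤ k(x) for all x ∈ X; (ii) V[l,k'](x,t) = k'(x) for all x ∈ X and t ≤ 0 (k' is the converged standard value function, invariant under the value iteration); and (iii) for each x ∈ X, V[l](x,t) → k'(x) as t → −∞. Then for each x ∈ X, V[l,k](x,t) → k'(x) as t → −∞; i.e., the warm-started value function converges exactly to the converged standard value function. -/
/-- Theorem 2: under hypothesis H(l), warm-starting from any k above
the converged standard value function k' converges exactly to k'. -/
theorem warmVal_exact_convergence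
    {X U D : Type*} [Nonempty X] [Nonempty U] [Nonempty D]
    (ξ : X → ℝ → U → D → ℝ → X)
    (l k k' : X → EReal)
    (Hl : ∀ (x : X) (t : ℝ), t < 0 → ∀ (u : U) (d : D),
      (⨅ τ ∈ Set.Ico t (0 : ℝ), l (ξ x t u d τ)) ≤ l (ξ x t u d 0))
    (hk'k : ∀ x, k' x ≤ k x)
    (hinv : ∀ (x : X) (t : ℝ), t ≤ 0 → warmVal ξ l k' x t = k' x)
    (hconv : ∀ x, Filter.Tendsto (fun t : ℝ => warmVal ξ l l x t) Filter.atBot (nhds (k' x))) :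
    ∀ x, Filter.Tendsto (fun t : ℝ => warmVal ξ l k x t) Filter.atBot (nhds (k' x)) := by
  intro x
  refine tendsto_of_tendsto_of_tendsto_of_le_of_le' tendsto_const_nhds (hconv x) ?_ ?_
  · -- lower bound: k' x ≤ warmVal ξ l k x t for t ≤ 0
    filter_upwards [Filter.eventually_le_atBot (0 : ℝ)] with t ht
    rw [← hinv x t ht]
    refine iSup_mono fun u => iInf_mono fun d => min_le_min le_rfl (hk'k _)
  · -- upper bound: warmVal ξ l k x t ≤ warmVal ξ l l x t for t < 0
    filter_upwards [Filter.eventually_lt_atBot (0 : ℝ)] with t ht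
    refine iSup_mono fun u => iInf_mono fun d => ?_
    exact (min_le_left _ _).trans (le_min le_rfl (Hl x t ht u d))
end

section
/- (Proposition 1: exact warm-starting under an enlarged target set.) Let l', l : X → EReal satisfy l'(x) ≤ l(x) for all x ∈ X (enlarged target set L ⊆ L'), and assume hypothesis H(l'). Suppose: (i) for each x ∈ X, V[l](x,t) → k(x) as t → −∞ (k = V*_l is the previously converged value function); (ii) for each x ∈ X, V[l'](x,t) → k''(x) as t → −∞ (k'' = V*_{l'} is the new converged value function); and (iii) V[l',k''](x,t) = k''(x) for all x ∈ X and t ≤ 0 (invariance of the converged value). Then warm-starting the new computation from k converges exactly: for each x ∈ X, V[l',k](x,t) → k''(x) as t → −∞. -/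
/-- Proposition 1: exact warm-starting under an enlarged target set:
warm-starting the computation for l' ≤ l from the converged value k of l converges
exactly to the converged value k'' of l'. -/
theorem warmVal_exact_enlarged_target
    {X U D : Type*} [Nonempty X] [Nonempty U] [Nonempty D]
    (ξ : X → ℝ → U → D → ℝ → X)
    (l' l k k'' : X → EReal)
    (hll : ∀ x, l' x ≤ l x)
    (Hl' : ∀ (x : X) (t : ℝ), t < 0 → ∀ (u : U) (d : D),
      (⨅ τ ∈ Set.Ico t (0 : ℝ), l' (ξ x t u d τ)) ≤ l' (ξ x t u d 0))
    (hk : ∀ x, Filter.Tendsto (fun t : ℝ => warmVal ξ l l x t) Filter.atBot (nhds (k x)))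
    (hk'' : ∀ x, Filter.Tendsto (fun t : ℝ => warmVal ξ l' l' x t) Filter.atBot (nhds (k'' x)))
    (hinv : ∀ (x : X) (t : ℝ), t ≤ 0 → warmVal ξ l' k'' x t = k'' x) :
    ∀ x, Filter.Tendsto (fun t : ℝ => warmVal ξ l' k x t) Filter.atBot (nhds (k'' x)) := by
  -- monotonicity of warmVal in the running cost and the warm-start function
  have mono : ∀ (l1 l2 k1 k2 : X → EReal), (∀ y, l1 y ≤ l2 y) → (∀ y, k1 y ≤ k2 y) →
      ∀ (x : X) (t : ℝ), warmVal ξ l1 k1 x t ≤ warmVal ξ l2 k2 x t := by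
    intro l1 l2 k1 k2 h1 h2 x t
    refine iSup_mono fun u => iInf_mono fun d => min_le_min ?_ (h2 _)
    exact iInf_mono fun τ => iInf_mono fun _ => h1 _
  -- k'' ≤ k pointwise, by comparing limits
  have hk''k : ∀ y, k'' y ≤ k y := fun y =>
    le_of_tendsto_of_tendsto' (hk'' y) (hk y) fun t => mono l' l l' l (hll) (hll) y t
  intro x
  refine tendsto_of_tendsto_of_tendsto_of_le_of_le'
    (tendsto_const_nhds) (hk'' x) ?_ ?_
  · filter_upwards [Filter.eventually_le_atBot (0 : ℝ)] with t ht
    calc k'' x = warmVal ξ l' k'' x t := (hinv x t ht).symm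
      _ ≤ warmVal ξ l' k x t := mono l' l' k'' k (fun _ => le_rfl) hk''k x t
  · filter_upwards [Filter.eventually_lt_atBot (0 : ℝ)] with t ht
    refine iSup_mono fun u => iInf_mono fun d => ?_
    calc min (⨅ τ ∈ Set.Ico t (0 : ℝ), l' (ξ x t u d τ)) (k (ξ x t u d 0))
        ≤ ⨅ τ ∈ Set.Ico t (0 : ℝ), l' (ξ x t u d τ) := min_le_left _ _
      _ = min (⨅ τ ∈ Set.Ico t (0 : ℝ), l' (ξ x t u d τ)) (l' (ξ x t u d 0)) :=
          (min_eq_left (Hl' x t ht u d)).symm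
end

section
/- (Proposition 2: exact warm-starting under reduced control authority.) Let 𝒰' ⊆ 𝒰 be nonempty subsets of U and let 𝒟 ⊆ D be nonempty, and assume hypothesis H(l) restricted to controls in 𝒰' and disturbances in 𝒟. Suppose: (i) for each x ∈ X, V[l;𝒰,𝒟](x,t) → k(x) as t → −∞ (k is the converged value with the original control set); (ii) for each x ∈ X, V[l;𝒰',𝒟](x,t) → k''(x) as t → −∞ (k'' is the converged value with the reduced control set); and (iii) V[l,k'';𝒰',𝒟](x,t) = k''(x) for all x ∈ X and t ≤ 0. Then warm-starting the reduced-authority computation from k converges exactly: for each x ∈ X, V[l,k;𝒰',𝒟](x,t) → k''(x) as t → −∞. -/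
/-- The warm-started value function with restricted control set `𝒰` and disturbance
set `𝒟`: running cost `l`, warm-start function `k`, trajectories `ξ x t u d : ℝ → X`. -/
noncomputable def warmValR {X U D : Type*} (ξ : X → ℝ → U → D → ℝ → X)
    (l k : X → EReal) (𝒰 : Set U) (𝒟 : Set D) (x : X) (t : ℝ) : EReal :=
  ⨆ u ∈ 𝒰, ⨅ d ∈ 𝒟,
    min (⨅ τ ∈ Set.Ico t (0 : ℝ), l (ξ x t u d τ)) (k (ξ x t u d 0))

/-- Monotonicity of `warmValR` in the warm-start function. -/
lemma warmValR_mono_k {X U D : Type*} (ξ : X → ℝ → U → D → ℝ → X)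
    (l k₁ k₂ : X → EReal) (𝒰 : Set U) (𝒟 : Set D) (x : X) (t : ℝ)
    (h : ∀ y, k₁ y ≤ k₂ y) :
    warmValR ξ l k₁ 𝒰 𝒟 x t ≤ warmValR ξ l k₂ 𝒰 𝒟 x t := by
  refine iSup_mono fun u => iSup_mono fun _ => iInf_mono fun d => iInf_mono fun _ => ?_
  exact min_le_min le_rfl (h _)

/-- Monotonicity of `warmValR` in the control set. -/
lemma warmValR_mono_U {X U D : Type*} (ξ : X → ℝ → U → D → ℝ → X)
    (l k : X → EReal) (𝒰' 𝒰 : Set U) (𝒟 : Set D) (x : X) (t : ℝ)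
    (h : 𝒰' ⊆ 𝒰) :
    warmValR ξ l k 𝒰' 𝒟 x t ≤ warmValR ξ l k 𝒰 𝒟 x t :=
  biSup_mono h

/-- Proposition 2: exact warm-starting under reduced control
authority: warm-starting the reduced-authority computation from the previously
converged value k converges exactly to the new converged value k''. -/
theorem warmValR_exact_reduced_control
    {X U D : Type*} [Nonempty X] [Nonempty U] [Nonempty D]
    (ξ : X → ℝ → U → D → ℝ → X) (l : X → EReal)
    (𝒰' 𝒰 : Set U) (𝒟 : Set D)
    (h𝒰'ne : 𝒰'.Nonempty) (h𝒰ne : 𝒰.Nonempty) (h𝒟ne : 𝒟.Nonempty)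
    (hsub : 𝒰' ⊆ 𝒰)
    (Hl : ∀ (x : X) (t : ℝ), t < 0 → ∀ u ∈ 𝒰', ∀ d ∈ 𝒟,
      (⨅ τ ∈ Set.Ico t (0 : ℝ), l (ξ x t u d τ)) ≤ l (ξ x t u d 0))
    (k k'' : X → EReal)
    (hk : ∀ x, Filter.Tendsto (fun t : ℝ => warmValR ξ l l 𝒰 𝒟 x t)
      Filter.atBot (nhds (k x)))
    (hk'' : ∀ x, Filter.Tendsto (fun t : ℝ => warmValR ξ l l 𝒰' 𝒟 x t)
      Filter.atBot (nhds (k'' x)))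
    (hinv : ∀ (x : X) (t : ℝ), t ≤ 0 → warmValR ξ l k'' 𝒰' 𝒟 x t = k'' x) :
    ∀ x, Filter.Tendsto (fun t : ℝ => warmValR ξ l k 𝒰' 𝒟 x t)
      Filter.atBot (nhds (k'' x)) := by
  -- k'' ≤ k pointwise, from limits and monotonicity in the control set.
  have hle : ∀ y, k'' y ≤ k y := fun y =>
    le_of_tendsto_of_tendsto' (hk'' y) (hk y)
      (fun t => warmValR_mono_U ξ l l 𝒰' 𝒰 𝒟 y t hsub)
  intro x
  -- Lower bound: k'' x ≤ warmValR ξ l k 𝒰' 𝒟 x t for t ≤ 0.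
  have hlow : ∀ᶠ t : ℝ in Filter.atBot, k'' x ≤ warmValR ξ l k 𝒰' 𝒟 x t := by
    filter_upwards [Filter.eventually_le_atBot (0 : ℝ)] with t ht
    calc k'' x = warmValR ξ l k'' 𝒰' 𝒟 x t := (hinv x t ht).symm
      _ ≤ warmValR ξ l k 𝒰' 𝒟 x t := warmValR_mono_k ξ l k'' k 𝒰' 𝒟 x t hle
  -- Upper bound: for t < 0, warmValR with any warm-start is ≤ warmValR with l,
  -- using H(l).
  have hup : ∀ᶠ t : ℝ in Filter.atBot,
      warmValR ξ l k 𝒰' 𝒟 x t ≤ warmValR ξ l l 𝒰' 𝒟 x t := by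
    filter_upwards [Filter.eventually_lt_atBot (0 : ℝ)] with t ht
    refine iSup_mono fun u => iSup_mono fun hu => iInf_mono fun d =>
      iInf_mono fun hd => ?_
    exact le_trans (min_le_left _ _) (le_min le_rfl (Hl x t ht u hu d hd))
  exact tendsto_of_tendsto_of_tendsto_of_le_of_le' tendsto_const_nhds (hk'' x) hlow hup
end

section
/- (Exact warm-starting under increased disturbance authority, Section V-C.) Let 𝒰 ⊆ U be nonempty and let 𝒟 ⊆ 𝒟' be nonempty subsets of D, and assume hypothesis H(l) restricted to controls in 𝒰 and disturbances in 𝒟'. Suppose: (i) for each x ∈ X, V[l;𝒰,𝒟](x,t) → k(x) as t → −∞ (k is the converged value with the original disturbance set); (ii) for each x ∈ X, V[l;𝒰,𝒟'](x,t) → k''(x) as t → −∞ (k'' is the converged value with the enlarged disturbance set); and (iii) V[l,k'';𝒰,𝒟'](x,t) = k''(x) for all x ∈ X and t ≤ 0. Then for each x ∈ X, V[l,k;𝒰,𝒟'](x,t) → k''(x) as t → −∞. -/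
/-- Section V-C: exact warm-starting under increased disturbance
authority. -/
theorem warmValR_exact_increased_disturbance
    {X U D : Type*} [Nonempty X] [Nonempty U] [Nonempty D]
    (ξ : X → ℝ → U → D → ℝ → X) (l : X → EReal)
    (𝒰 : Set U) (𝒟 𝒟' : Set D)
    (h𝒰ne : 𝒰.Nonempty) (h𝒟ne : 𝒟.Nonempty) (h𝒟'ne : 𝒟'.Nonempty)
    (hsub : 𝒟 ⊆ 𝒟')
    (Hl : ∀ (x : X) (t : ℝ), t < 0 → ∀ u ∈ 𝒰, ∀ d ∈ 𝒟',
      (⨅ τ ∈ Set.Ico t (0 : ℝ), l (ξ x t u d τ)) ≤ l (ξ x t u d 0))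
    (k k'' : X → EReal)
    (hk : ∀ x, Filter.Tendsto (fun t : ℝ => warmValR ξ l l 𝒰 𝒟 x t)
      Filter.atBot (nhds (k x)))
    (hk'' : ∀ x, Filter.Tendsto (fun t : ℝ => warmValR ξ l l 𝒰 𝒟' x t)
      Filter.atBot (nhds (k'' x)))
    (hinv : ∀ (x : X) (t : ℝ), t ≤ 0 → warmValR ξ l k'' 𝒰 𝒟' x t = k'' x) :
    ∀ x, Filter.Tendsto (fun t : ℝ => warmValR ξ l k 𝒰 𝒟' x t)
      Filter.atBot (nhds (k'' x)) := by
  -- Step 1 : k'' ≤ k pointwise, since enlarging the disturbance set decreases V.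
  have hmono : ∀ (y : X) (t : ℝ),
      warmValR ξ l l 𝒰 𝒟' y t ≤ warmValR ξ l l 𝒰 𝒟 y t := by
    intro y t
    refine iSup₂_mono fun u hu => ?_
    exact biInf_mono fun d hd => hsub hd
  have hkk : ∀ y, k'' y ≤ k y := fun y =>
    le_of_tendsto_of_tendsto' (hk'' y) (hk y) (fun t => hmono y t)
  intro x
  -- Lower bound: k'' x ≤ warmValR ξ l k 𝒰 𝒟' x t for t ≤ 0.
  have hlow : ∀ t : ℝ, t ≤ 0 → k'' x ≤ warmValR ξ l k 𝒰 𝒟' x t := by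
    intro t ht
    rw [← hinv x t ht]
    refine iSup₂_mono fun u hu => iInf₂_mono fun d hd => ?_
    exact min_le_min le_rfl (hkk _)
  -- Upper bound: for t < 0, warmValR ξ l k 𝒰 𝒟' x t ≤ warmValR ξ l l 𝒰 𝒟' x t.
  have hup : ∀ t : ℝ, t < 0 →
      warmValR ξ l k 𝒰 𝒟' x t ≤ warmValR ξ l l 𝒰 𝒟' x t := by
    intro t ht
    refine iSup₂_mono fun u hu => iInf₂_mono fun d hd => ?_
    exact le_min (min_le_left _ _) ((min_le_left _ _).trans (Hl x t ht u hu d hd))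
  refine tendsto_of_tendsto_of_tendsto_of_le_of_le' tendsto_const_nhds (hk'' x) ?_ ?_
  · filter_upwards [Filter.eventually_le_atBot (0 : ℝ)] with t ht
    exact hlow t ht
  · filter_upwards [Filter.eventually_lt_atBot (0 : ℝ)] with t ht
    exact hup t ht
end

section
/- (Remark 1: sandwich bound under a shrunken target set.) Let l, l' : X → EReal satisfy l(x) ≤ l'(x) for all x ∈ X (shrunken target set L ⊇ L'), assume hypothesis H(l'), and suppose the warm-start function k : X → EReal is invariant under the value iteration with running cost l, i.e., V[l,k](x,t) = k(x) for all x ∈ X and t ≤ 0. Then for all x ∈ X and all t < 0, k(x) ≤ V[l',k](x,t) ≤ V[l'](x,t); i.e., the warm-started iterate always lies between its initialization and the true value for the new target, so every iteration either reduces conservativeness or remains at a local solution. -/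
/-- Remark 1: sandwich bound under a shrunken target set: if l ≤ l',
H(l') holds, and k is invariant under the value iteration with running cost l, then
the warm-started iterate for l' lies between k and the standard value for l'. -/
theorem warmVal_sandwich_shrunken_target
    {X U D : Type*} [Nonempty X] [Nonempty U] [Nonempty D]
    (ξ : X → ℝ → U → D → ℝ → X)
    (l l' k : X → EReal)
    (hll' : ∀ x, l x ≤ l' x)
    (Hl' : ∀ (x : X) (t : ℝ), t < 0 → ∀ (u : U) (d : D),
      (⨅ τ ∈ Set.Ico t (0 : ℝ), l' (ξ x t u d τ)) ≤ l' (ξ x t u d 0))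
    (hinv : ∀ (x : X) (t : ℝ), t ≤ 0 → warmVal ξ l k x t = k x) :
    ∀ (x : X) (t : ℝ), t < 0 →
      k x ≤ warmVal ξ l' k x t ∧ warmVal ξ l' k x t ≤ warmVal ξ l' l' x t := by
  intro x t ht
  constructor
  · rw [← hinv x t ht.le]
    unfold warmVal
    refine iSup_mono fun u => iInf_mono fun d =>
      min_le_min (iInf_mono fun τ => iInf_mono fun _ => hll' _) le_rfl
  · unfold warmVal
    refine iSup_mono fun u => iInf_mono fun d => ?_
    calc min (⨅ τ ∈ Set.Ico t (0:ℝ), l' (ξ x t u d τ)) (k (ξ x t u d 0))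
        ≤ ⨅ τ ∈ Set.Ico t (0:ℝ), l' (ξ x t u d τ) := min_le_left _ _
      _ = min (⨅ τ ∈ Set.Ico t (0:ℝ), l' (ξ x t u d τ)) (l' (ξ x t u d 0)) :=
        (min_eq_left (Hl' x t ht u d)).symm
end

section
/- (Remark 2: sandwich bound under increased control authority.) Let 𝒰 ⊆ 𝒰' be nonempty subsets of U and let 𝒟 ⊆ D be nonempty, assume hypothesis H(l) restricted to controls in 𝒰' and disturbances in 𝒟, and suppose the warm-start function k : X → EReal is invariant under the value iteration with control set 𝒰, i.e., V[l,k;𝒰,𝒟](x,t) = k(x) for all x ∈ X and t ≤ 0. Then for all x ∈ X and all t < 0, k(x) ≤ V[l,k;𝒰',𝒟](x,t) ≤ V[l;𝒰',𝒟](x,t). -/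
/-- Remark 2: sandwich bound under increased control authority: if
𝒰 ⊆ 𝒰', H(l) holds restricted to (𝒰',𝒟), and k is invariant under the value
iteration with control set 𝒰, then the warm-started iterate with control set 𝒰'
lies between k and the standard value with control set 𝒰'. -/
theorem warmValR_sandwich_increased_control
    {X U D : Type*} [Nonempty X] [Nonempty U] [Nonempty D]
    (ξ : X → ℝ → U → D → ℝ → X) (l k : X → EReal)
    (𝒰 𝒰' : Set U) (𝒟 : Set D)
    (h𝒰ne : 𝒰.Nonempty) (h𝒰'ne : 𝒰'.Nonempty) (h𝒟ne : 𝒟.Nonempty)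
    (hsub : 𝒰 ⊆ 𝒰')
    (Hl : ∀ (x : X) (t : ℝ), t < 0 → ∀ u ∈ 𝒰', ∀ d ∈ 𝒟,
      (⨅ τ ∈ Set.Ico t (0 : ℝ), l (ξ x t u d τ)) ≤ l (ξ x t u d 0))
    (hinv : ∀ (x : X) (t : ℝ), t ≤ 0 → warmValR ξ l k 𝒰 𝒟 x t = k x) :
    ∀ (x : X) (t : ℝ), t < 0 →
      k x ≤ warmValR ξ l k 𝒰' 𝒟 x t ∧
        warmValR ξ l k 𝒰' 𝒟 x t ≤ warmValR ξ l l 𝒰' 𝒟 x t := by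
  intro x t ht
  constructor
  · rw [← hinv x t ht.le]
    exact biSup_mono hsub
  · unfold warmValR
    refine iSup₂_mono fun u hu => iInf₂_mono fun d hd => ?_
    have h := Hl x t ht u hu d hd
    calc min (⨅ τ ∈ Set.Ico t (0:ℝ), l (ξ x t u d τ)) (k (ξ x t u d 0))
        ≤ ⨅ τ ∈ Set.Ico t (0:ℝ), l (ξ x t u d τ) := min_le_left _ _
      _ ≤ min (⨅ τ ∈ Set.Ico t (0:ℝ), l (ξ x t u d τ)) (l (ξ x t u d 0)) :=
          le_min le_rfl h
end
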